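/- Let M and S be G-graded A-modules. If K × S is a graded classical weakly prime A-submodule of M × S, then K is a graded classical weakly prime A-submodule of M. -/

import Mathlib

section GCWP

variable {G : Type*} [AddGroup G] [DecidableEq G]
variable {A : Type*} [Ring A] {M : Type*} [AddCommGroup M] [Module A M]

/-- A submodule is graded (homogeneous) if it is generated by its homogeneous elements. -/
def IsGrSub (ℳ : G → AddSubgroup M) (K : Submodule A M) : Prop :=
  K ≤ Submodule.span A ((K : Set M) ∩ {m | SetLike.IsHomogeneousElem ℳ m})

/-- `K` is a graded classical weakly prime submodule. -/
def IsGCWP (𝒜 : G → AddSubgroup A) (ℳ : G → AddSubgroup M) (K : Submodule A M) : Prop :=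
  K ≠ ⊤ ∧ IsGrSub ℳ K ∧
  ∀ x y : A, SetLike.IsHomogeneousElem 𝒜 x → SetLike.IsHomogeneousElem 𝒜 y →
    ∀ L : Submodule A M, IsGrSub ℳ L →
      (∃ a : A, ∃ l ∈ L, (x * a * y) • l ≠ 0) →
      (∀ a : A, ∀ l ∈ L, (x * a * y) • l ∈ K) →
      (∀ l ∈ L, x • l ∈ K) ∨ (∀ l ∈ L, y • l ∈ K)

/-- `K` is a graded classical prime submodule. -/
def IsGCP (𝒜 : G → AddSubgroup A) (ℳ : G → AddSubgroup M) (K : Submodule A M) : Prop :=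
  K ≠ ⊤ ∧ IsGrSub ℳ K ∧
  ∀ x y : A, SetLike.IsHomogeneousElem 𝒜 x → SetLike.IsHomogeneousElem 𝒜 y →
    ∀ L : Submodule A M, IsGrSub ℳ L →
      (∀ a : A, ∀ l ∈ L, (x * a * y) • l ∈ K) →
      (∀ l ∈ L, x • l ∈ K) ∨ (∀ l ∈ L, y • l ∈ K)

/-- `(x, y, L)` is a graded classical triple zero of `K`. -/
def TripleZero (K : Submodule A M) (x y : A) (L : Submodule A M) : Prop :=
  (∀ a : A, ∀ l ∈ L, (x * a * y) • l = 0) ∧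
    ¬ (∀ l ∈ L, x • l ∈ K) ∧ ¬ (∀ l ∈ L, y • l ∈ K)

/-- `L` is an `A_e`-submodule of `M_g` (as an additive subgroup of `M`). -/
def IsAeSub (𝒜 : G → AddSubgroup A) (ℳ : G → AddSubgroup M) (g : G) (L : AddSubgroup M) : Prop :=
  (L : Set M) ⊆ (ℳ g : Set M) ∧ ∀ a ∈ 𝒜 0, ∀ l ∈ L, a • l ∈ L

/-- `L` is a faithful `A_e`-module. -/
def AeFaithful (𝒜 : G → AddSubgroup A) (L : AddSubgroup M) : Prop :=
  ∀ a ∈ 𝒜 0, (∀ l ∈ L, a • l = 0) → a = 0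

/-- `I` is an ideal of `A_e` (as an additive subgroup of `A`). -/
def IsAeIdeal (𝒜 : G → AddSubgroup A) (I : AddSubgroup A) : Prop :=
  (I : Set A) ⊆ (𝒜 0 : Set A) ∧ ∀ a ∈ 𝒜 0, ∀ r ∈ I, a * r ∈ I ∧ r * a ∈ I

/-- `K` is a `g`-classical weakly prime submodule of `M`. -/
def IsgCWP (𝒜 : G → AddSubgroup A) (ℳ : G → AddSubgroup M) (g : G) (K : Submodule A M) :
    Prop :=
  IsGrSub ℳ K ∧ ¬ ((ℳ g : Set M) ⊆ (K : Set M)) ∧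
  ∀ x ∈ 𝒜 0, ∀ y ∈ 𝒜 0, ∀ L : AddSubgroup M, IsAeSub 𝒜 ℳ g L →
    (∃ a ∈ 𝒜 0, ∃ l ∈ L, (x * a * y) • l ≠ 0) →
    (∀ a ∈ 𝒜 0, ∀ l ∈ L, (x * a * y) • l ∈ K) →
    (∀ l ∈ L, x • l ∈ K) ∨ (∀ l ∈ L, y • l ∈ K)

/-- `P` is a weakly prime (proper) left ideal of `A_e`, given as a subset of `A`. -/
def IsWeaklyPrimeAe (𝒜 : G → AddSubgroup A) (P : Set A) : Prop :=
  P ⊆ (𝒜 0 : Set A) ∧ ¬ ((𝒜 0 : Set A) ⊆ P) ∧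
  (0 : A) ∈ P ∧ (∀ p ∈ P, ∀ q ∈ P, p + q ∈ P) ∧ (∀ p ∈ P, -p ∈ P) ∧
  (∀ a ∈ 𝒜 0, ∀ p ∈ P, a * p ∈ P) ∧
  ∀ I J : AddSubgroup A, IsAeIdeal 𝒜 I → IsAeIdeal 𝒜 J →
    (∃ i ∈ I, ∃ j ∈ J, i * j ≠ 0) → (∀ i ∈ I, ∀ j ∈ J, i * j ∈ P) →
    (I : Set A) ⊆ P ∨ (J : Set A) ⊆ P

end GCWP

section GW2A
variable {G : Type*} [AddGroup G] [DecidableEq G]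
variable {A : Type*} [Ring A] {M : Type*} [AddCommGroup M] [Module A M]

/-- `K` is a graded weakly 2-absorbing submodule. -/
def IsGW2A (𝒜 : G → AddSubgroup A) (ℳ : G → AddSubgroup M) (K : Submodule A M) : Prop :=
  K ≠ ⊤ ∧ IsGrSub ℳ K ∧
  ∀ x y : A, SetLike.IsHomogeneousElem 𝒜 x → SetLike.IsHomogeneousElem 𝒜 y →
    ∀ L : Submodule A M, IsGrSub ℳ L →
      (∃ a : A, ∃ l ∈ L, (x * a * y) • l ≠ 0) →
      (∀ a : A, ∀ l ∈ L, (x * a * y) • l ∈ K) →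
      (∀ l ∈ L, x • l ∈ K) ∨ (∀ l ∈ L, y • l ∈ K) ∨
        (∀ a : A, ∀ m : M, (x * a * y) • m ∈ K)

end GW2A

section GradedSubmodules

variable {G : Type*} {A : Type*} [Ring A]
variable {M : Type*} [AddCommGroup M] [Module A M] {S : Type*} [AddCommGroup S] [Module A S]

theorem IsGrSub.map {N : Type*} [AddCommGroup N] [Module A N]
    {ℳ : G → AddSubgroup M} {𝒩 : G → AddSubgroup N} {L : Submodule A M} (hL : IsGrSub ℳ L)
    (f : M →ₗ[A] N)
    (hf : ∀ m, SetLike.IsHomogeneousElem ℳ m → SetLike.IsHomogeneousElem 𝒩 (f m)) :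
    IsGrSub 𝒩 (L.map f) := by
  rw [IsGrSub, Submodule.map_le_iff_le_comap]
  refine hL.trans (Submodule.span_le.2 ?_)
  rintro m ⟨hmL, hm⟩
  exact Submodule.subset_span ⟨Submodule.mem_map_of_mem hmL, hf m hm⟩

theorem isHomogeneousElem_prod_fst {ℳ : G → AddSubgroup M} {𝒮 : G → AddSubgroup S} {p : M × S}
    (hp : SetLike.IsHomogeneousElem (fun g => (ℳ g).prod (𝒮 g)) p) :
    SetLike.IsHomogeneousElem ℳ p.1 :=
  let ⟨g, hg⟩ := hp
  ⟨g, hg.1⟩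

theorem isHomogeneousElem_prod_inl {ℳ : G → AddSubgroup M} (𝒮 : G → AddSubgroup S) {m : M}
    (hm : SetLike.IsHomogeneousElem ℳ m) :
    SetLike.IsHomogeneousElem (fun g => (ℳ g).prod (𝒮 g)) (m, (0 : S)) :=
  let ⟨g, hg⟩ := hm
  ⟨g, hg, (𝒮 g).zero_mem⟩

theorem IsGrSub.of_prod_top {ℳ : G → AddSubgroup M} {𝒮 : G → AddSubgroup S} {K : Submodule A M}
    (hK : IsGrSub (fun g => (ℳ g).prod (𝒮 g)) (K.prod (⊤ : Submodule A S))) :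
    IsGrSub ℳ K := by
  simpa only [Submodule.prod_map_fst] using
    hK.map (LinearMap.fst A M S) fun _ => isHomogeneousElem_prod_fst

theorem IsGrSub.map_inl {ℳ : G → AddSubgroup M} (𝒮 : G → AddSubgroup S) {L : Submodule A M}
    (hL : IsGrSub ℳ L) :
    IsGrSub (fun g => (ℳ g).prod (𝒮 g)) (L.map (LinearMap.inl A M S)) :=
  hL.map _ fun _ => isHomogeneousElem_prod_inl 𝒮

end GradedSubmodules

section Theorems

variable {G : Type*} [AddGroup G] [DecidableEq G]
variable {A : Type*} [Ring A] {M : Type*} [AddCommGroup M] [Module A M]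
variable (𝒜 : G → AddSubgroup A) (ℳ : G → AddSubgroup M)
variable [SetLike.GradedMonoid 𝒜] [SetLike.GradedSMul 𝒜 ℳ]
variable [DirectSum.Decomposition 𝒜] [DirectSum.Decomposition ℳ]

theorem stmt15 {S : Type*} [AddCommGroup S] [Module A S] (𝒮 : G → AddSubgroup S)
    (K : Submodule A M)
    (hK : IsGCWP 𝒜 (fun g => (ℳ g).prod (𝒮 g)) (K.prod (⊤ : Submodule A S))) :
    IsGCWP 𝒜 ℳ K := by
  obtain ⟨hne, hgr, hprime⟩ := hK
  refine ⟨fun hK => hne (by rw [hK, Submodule.prod_top]), hgr.of_prod_top, ?_⟩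
  intro x y hx hy L hL ⟨a, l, hl, hxayl⟩ hsub
  -- Apply the hypothesis to the copy `L × 0` of `L`; membership in `K × S` only sees the first coordinate.
  have hnz : ∃ a : A, ∃ p ∈ L.map (LinearMap.inl A M S), (x * a * y) • p ≠ 0 :=
    ⟨a, (l, 0), Submodule.mem_map_of_mem hl, fun h => hxayl (congrArg Prod.fst h)⟩
  have hsub' : ∀ a : A, ∀ p ∈ L.map (LinearMap.inl A M S),
      (x * a * y) • p ∈ K.prod (⊤ : Submodule A S) := by
    rintro a _ ⟨l, hl, rfl⟩
    exact ⟨hsub a l hl, trivial⟩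
  rcases hprime x y hx hy _ (hL.map_inl 𝒮) hnz hsub' with h | h
  · exact .inl fun l hl => (h _ (Submodule.mem_map_of_mem hl)).1
  · exact .inr fun l hl => (h _ (Submodule.mem_map_of_mem hl)).1

end Theorems
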